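/- If the empirical distribution of play δ^T of T iterations of a regret minimizer is a γ(T)-approximate CCE with γ(T) = C/√T, and δ^T is ε-normal-form marginalizable, then the profile of empirical average strategies σ̄^T (the marginals of δ^T) satisfies NashGap(σ̄^T) ≤ C/√T + 2M√(2ε), where M bounds absolute utilities. -/

import Mathlib

open Finset

noncomputable def marg {N : Type} [Fintype N] [DecidableEq N]
    {P : N → Type} [∀ i, Fintype (P i)] [∀ i, DecidableEq (P i)]
    (δ : (∀ j, P j) → ℝ) (i : N) (a : P i) : ℝ :=
  ∑ ρ : ∀ j, P j, if ρ i = a then δ ρ else 0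

noncomputable def prodMarg {N : Type} [Fintype N] [DecidableEq N]
    {P : N → Type} [∀ i, Fintype (P i)] [∀ i, DecidableEq (P i)]
    (δ : (∀ j, P j) → ℝ) (ρ : ∀ j, P j) : ℝ :=
  ∏ i, marg δ i (ρ i)

noncomputable def KL {X : Type} [Fintype X] (p q : X → ℝ) : ℝ :=
  ∑ x, p x * Real.log (p x / q x)

noncomputable def expUtil {X : Type} [Fintype X] (u : X → ℝ) (δ : X → ℝ) : ℝ :=
  ∑ x, u x * δ x

noncomputable def devUtil {N : Type} [Fintype N] [DecidableEq N]
    {P : N → Type} [∀ i, Fintype (P i)] [∀ i, DecidableEq (P i)]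
    (u : N → (∀ j, P j) → ℝ) (δ : (∀ j, P j) → ℝ) (i : N) (a : P i) : ℝ :=
  ∑ ρ, δ ρ * u i (Function.update ρ i a)

noncomputable def gap {N : Type} [Fintype N] [DecidableEq N] [Nonempty N]
    {P : N → Type} [∀ i, Fintype (P i)] [∀ i, DecidableEq (P i)] [∀ i, Nonempty (P i)]
    (u : N → (∀ j, P j) → ℝ) (δ : (∀ j, P j) → ℝ) : ℝ :=
  haveI : Nonempty (Σ i, P i) := ⟨⟨Classical.arbitrary N, Classical.arbitrary _⟩⟩
  Finset.univ.sup' Finset.univ_nonempty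
    (fun q : Σ i, P i => devUtil u δ q.1 q.2 - expUtil (u q.1) δ)

/-! Pointwise, `3 (x - 1)² ≤ (2x + 4) · klFun x` for `x ≥ 0`, where
`klFun x = x log x + 1 - x`. Applied to `x = δ ρ / μ ρ` with `μ = prodMarg δ`, and summed by
Cauchy–Schwarz against the weights `(2 δ ρ + 4 μ ρ) / 3`, which sum to `2`, this gives
Pinsker's inequality `‖δ - μ‖₁² ≤ 2 KL(δ ‖ μ)`. Each deviation gain
`devUtil u σ i a - expUtil (u i) σ` is linear in `σ` with coefficients bounded by `2M`, so
replacing `δ` by `μ` changes it by at most `2M ‖δ - μ‖₁ ≤ 2M √(2ε)`. -/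

open Real Set InformationTheory

lemma monotoneOn_add_one_mul_log_sub :
    MonotoneOn (fun x : ℝ => (x + 1) * log x - 2 * (x - 1)) (Ioi 0) := by
  refine monotoneOn_of_hasDerivWithinAt_nonneg (f' := fun x => log x + x⁻¹ - 1)
    (convex_Ioi 0) (fun x hx => by fun_prop (disch := exact hx.ne')) (fun x hx => ?_)
    (fun x hx => ?_) <;> rw [interior_Ioi, Set.mem_Ioi] at hx
  · refine ((((hasDerivAt_id x).add_const 1).mul (hasDerivAt_log hx.ne')).sub
      (((hasDerivAt_id x).sub_const 1).const_mul 2)).hasDerivWithinAt.congr_deriv ?_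
    field_simp
    simp only [id]
    ring
  · linarith [one_sub_inv_le_log_of_pos hx]

lemma three_mul_sq_sub_one_le_mul_klFun {x : ℝ} (hx : 0 ≤ x) :
    3 * (x - 1) ^ 2 ≤ (2 * x + 4) * klFun x := by
  set g : ℝ → ℝ := fun x => (2 * x + 4) * klFun x - 3 * (x - 1) ^ 2
  have hg : ∀ x ≠ 0, HasDerivAt g (4 * ((x + 1) * log x - 2 * (x - 1))) x := fun x hx => by
    refine ((((hasDerivAt_id x).const_mul 2).add_const 4).mul (hasDerivAt_klFun hx) |>.sub
      (((hasDerivAt_id x).sub_const 1).pow 2 |>.const_mul 3)).congr_deriv ?_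
    simp only [id, klFun_apply]
    ring
  have hg1 : g 1 = 0 := by simp [g, klFun_one]
  -- `g' x = 4 h x` where `h x = (x + 1) log x - 2 (x - 1)` is increasing with `h 1 = 0`.
  suffices 0 ≤ g x by simp only [g] at this; linarith
  rcases le_total x 1 with h1 | h1
  · have : AntitoneOn g (Icc 0 1) := by
      refine antitoneOn_of_hasDerivWithinAt_nonpos (convex_Icc 0 1)
        (f' := fun y => 4 * ((y + 1) * log y - 2 * (y - 1))) (by fun_prop)
        (fun y hy => ?_) (fun y hy => ?_) <;> rw [interior_Icc] at hy
      · exact (hg y hy.1.ne').hasDerivWithinAt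
      · have := monotoneOn_add_one_mul_log_sub hy.1 (Set.mem_Ioi.2 one_pos) hy.2.le
        simp only [log_one] at this
        linarith
    simpa [hg1] using this ⟨hx, h1⟩ ⟨zero_le_one, le_rfl⟩ h1
  · have : MonotoneOn g (Ici 1) := by
      refine monotoneOn_of_hasDerivWithinAt_nonneg (convex_Ici 1)
        (f' := fun y => 4 * ((y + 1) * log y - 2 * (y - 1))) (by fun_prop)
        (fun y hy => ?_) (fun y hy => ?_) <;> rw [interior_Ici, Set.mem_Ioi] at hy
      · exact (hg y (by positivity)).hasDerivWithinAt
      · have := monotoneOn_add_one_mul_log_sub (Set.mem_Ioi.2 one_pos)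
          (Set.mem_Ioi.2 (by linarith)) hy.le
        simp only [log_one] at this
        linarith
    simpa [hg1] using this self_mem_Ici h1 h1

lemma three_mul_sq_sub_le_mul_klFun {p q : ℝ} (hp : 0 ≤ p) (hq : 0 ≤ q)
    (hpq : q = 0 → p = 0) :
    3 * (p - q) ^ 2 ≤ (2 * p + 4 * q) * (q * klFun (p / q)) := by
  rcases hq.eq_or_lt with rfl | hq
  · simp [hpq rfl]
  calc 3 * (p - q) ^ 2 = q ^ 2 * (3 * (p / q - 1) ^ 2) := by field_simp
    _ ≤ q ^ 2 * ((2 * (p / q) + 4) * klFun (p / q)) :=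
      mul_le_mul_of_nonneg_left (three_mul_sq_sub_one_le_mul_klFun (by positivity)) (sq_nonneg q)
    _ = (2 * p + 4 * q) * (q * klFun (p / q)) := by field_simp

lemma mul_klFun_div {p q : ℝ} (hpq : q = 0 → p = 0) :
    q * klFun (p / q) = p * log (p / q) + q - p := by
  rcases eq_or_ne q 0 with rfl | hq
  · simp [hpq rfl]
  · rw [klFun_apply]
    field_simp

lemma KL_eq_sum_mul_klFun {X : Type} [Fintype X] {p q : X → ℝ}
    (hpq : ∀ x, q x = 0 → p x = 0) (hsum : ∑ x, p x = ∑ x, q x) :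
    KL p q = ∑ x, q x * klFun (p x / q x) := by
  simp only [mul_klFun_div (hpq _), sum_sub_distrib, sum_add_distrib, hsum, KL]
  ring

theorem sq_sum_abs_sub_le_two_mul_KL {X : Type} [Fintype X] {p q : X → ℝ}
    (hp : ∀ x, 0 ≤ p x) (hq : ∀ x, 0 ≤ q x) (hpq : ∀ x, q x = 0 → p x = 0)
    (hps : ∑ x, p x = 1) (hqs : ∑ x, q x = 1) :
    (∑ x, |p x - q x|) ^ 2 ≤ 2 * KL p q := by
  have hCS := sum_sq_le_sum_mul_sum_of_sq_le_mul univ (r := fun x => |p x - q x|)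
    (f := fun x => (2 * p x + 4 * q x) / 3) (g := fun x => q x * klFun (p x / q x))
    (fun x _ => by have := hp x; have := hq x; positivity)
    (fun x _ => mul_nonneg (hq x) (klFun_nonneg (div_nonneg (hp x) (hq x))))
    (fun x _ => by
      rw [sq_abs, div_mul_eq_mul_div, le_div_iff₀ three_pos, mul_comm]
      exact three_mul_sq_sub_le_mul_klFun (hp x) (hq x) (hpq x))
  have hf : ∑ x, (2 * p x + 4 * q x) / 3 = 2 := by
    rw [← sum_div, sum_add_distrib, ← mul_sum, ← mul_sum, hps, hqs]
    norm_num
  rwa [hf, ← KL_eq_sum_mul_klFun hpq (hps.trans hqs.symm)] at hCS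

section Game

variable {N : Type} [Fintype N] [DecidableEq N] {P : N → Type} [∀ i, Fintype (P i)]
  [∀ i, DecidableEq (P i)] {δ : (∀ j, P j) → ℝ}

lemma marg_nonneg (hδ : ∀ ρ, 0 ≤ δ ρ) (i : N) (a : P i) : 0 ≤ marg δ i a :=
  sum_nonneg fun ρ _ => by split_ifs <;> simp [hδ ρ]

lemma le_marg (hδ : ∀ ρ, 0 ≤ δ ρ) (ρ : ∀ j, P j) (i : N) :
    δ ρ ≤ marg δ i (ρ i) := by
  simpa [marg] using
    single_le_sum (f := fun σ : ∀ j, P j => if σ i = ρ i then δ σ else 0)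
      (fun σ _ => by split_ifs <;> simp [hδ σ]) (mem_univ ρ)

lemma sum_marg (i : N) : ∑ a, marg δ i a = ∑ ρ, δ ρ := by
  simp only [marg]
  rw [sum_comm]
  simp

lemma prodMarg_nonneg (hδ : ∀ ρ, 0 ≤ δ ρ) (ρ : ∀ j, P j) : 0 ≤ prodMarg δ ρ :=
  prod_nonneg fun i _ => marg_nonneg hδ i (ρ i)

lemma sum_prodMarg : ∑ ρ, prodMarg δ ρ = (∑ ρ, δ ρ) ^ Fintype.card N := by
  simp only [prodMarg, ← Fintype.prod_sum, sum_marg, prod_const, card_univ]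

lemma eq_zero_of_prodMarg_eq_zero (hδ : ∀ ρ, 0 ≤ δ ρ) {ρ : ∀ j, P j}
    (h : prodMarg δ ρ = 0) : δ ρ = 0 := by
  by_contra hne
  have hpos : 0 < δ ρ := (hδ ρ).lt_of_ne' hne
  exact h.not_gt (prod_pos fun i _ => hpos.trans_le (le_marg hδ ρ i))

lemma devUtil_sub_expUtil (u : N → (∀ j, P j) → ℝ) (i : N) (a : P i) :
    devUtil u δ i a - expUtil (u i) δ =
      ∑ ρ, δ ρ * (u i (Function.update ρ i a) - u i ρ) := by
  simp only [devUtil, expUtil, ← sum_sub_distrib, mul_sub, mul_comm (u i _)]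

variable [Nonempty N] [∀ i, Nonempty (P i)]

lemma gap_le_gap_add {u : N → (∀ j, P j) → ℝ} {M : ℝ} (hM : ∀ i ρ, |u i ρ| ≤ M)
    {μ : (∀ j, P j) → ℝ} : gap u μ ≤ gap u δ + 2 * M * ∑ ρ, |μ ρ - δ ρ| := by
  refine sup'_le _ _ fun ⟨i, a⟩ _ => ?_
  have hδ : devUtil u δ i a - expUtil (u i) δ ≤ gap u δ :=
    le_sup' (fun q : Σ i, P i => devUtil u δ q.1 q.2 - expUtil (u q.1) δ) (mem_univ ⟨i, a⟩)
  have hdiff : (devUtil u μ i a - expUtil (u i) μ) - (devUtil u δ i a - expUtil (u i) δ)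
      ≤ 2 * M * ∑ ρ, |μ ρ - δ ρ| := by
    rw [devUtil_sub_expUtil, devUtil_sub_expUtil, ← sum_sub_distrib, mul_sum]
    refine sum_le_sum fun ρ _ => ?_
    have hu : |u i (Function.update ρ i a) - u i ρ| ≤ 2 * M :=
      (abs_sub _ _).trans (by linarith [hM i (Function.update ρ i a), hM i ρ])
    calc _ = (μ ρ - δ ρ) * (u i (Function.update ρ i a) - u i ρ) := by ring
      _ ≤ |μ ρ - δ ρ| * |u i (Function.update ρ i a) - u i ρ| :=
        (le_abs_self _).trans_eq (abs_mul _ _)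
      _ ≤ |μ ρ - δ ρ| * (2 * M) := by gcongr
      _ = 2 * M * |μ ρ - δ ρ| := mul_comm _ _
  linarith

lemma gap_prodMarg_le {u : N → (∀ j, P j) → ℝ} {M ε : ℝ} (hM : ∀ i ρ, |u i ρ| ≤ M)
    (hδ : ∀ ρ, 0 ≤ δ ρ) (hsum : ∑ ρ, δ ρ = 1) (hε : KL δ (prodMarg δ) ≤ ε) :
    gap u (prodMarg δ) ≤ gap u δ + 2 * M * √(2 * ε) := by
  have hM0 : 0 ≤ M :=
    (abs_nonneg _).trans (hM (Classical.arbitrary N) (Classical.arbitrary _))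
  have hpinsker := sq_sum_abs_sub_le_two_mul_KL hδ (prodMarg_nonneg hδ)
    (fun _ => eq_zero_of_prodMarg_eq_zero hδ) hsum (by rw [sum_prodMarg, hsum, one_pow])
  have hL1 : ∑ ρ, |prodMarg δ ρ - δ ρ| ≤ √(2 * ε) := by
    simp_rw [abs_sub_comm (prodMarg δ _)]
    exact Real.le_sqrt_of_sq_le (hpinsker.trans (by linarith))
  calc gap u (prodMarg δ)
      ≤ gap u δ + 2 * M * ∑ ρ, |prodMarg δ ρ - δ ρ| := gap_le_gap_add hM
    _ ≤ gap u δ + 2 * M * √(2 * ε) := by gcongr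

end Game

theorem nashGap_of_regret_minimizer_general
    {N : Type} [Fintype N] [DecidableEq N] [Nonempty N]
    {P : N → Type} [∀ i, Fintype (P i)] [∀ i, DecidableEq (P i)] [∀ i, Nonempty (P i)]
    (u : N → (∀ j, P j) → ℝ) (M : ℝ)
    (hM : ∀ (i : N) (ρ : ∀ j, P j), |u i ρ| ≤ M)
    (T : ℕ) (C : ℝ)
    (δ : (∀ j, P j) → ℝ) (hpos : ∀ ρ, 0 ≤ δ ρ) (hsum : ∑ ρ, δ ρ = 1)
    (hcce : gap u δ ≤ C / Real.sqrt T)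
    (ε : ℝ) (hε : KL δ (prodMarg δ) ≤ ε) :
    gap u (prodMarg δ) ≤ C / Real.sqrt T + 2 * M * Real.sqrt (2 * ε) :=
  (gap_prodMarg_le hM hpos hsum hε).trans (by linarith)

/-- If the empirical distribution of play `δ` after `T` iterations of a regret minimizer
is a `C/√T`-approximate CCE and is `ε`-normal-form marginalizable, then the profile of
empirical average strategies (the marginals of `δ`) satisfies
`NashGap ≤ C/√T + 2M√(2ε)`, where `M` bounds the absolute utilities. -/
theorem nashGap_of_regret_minimizer
    {N : Type} [Fintype N] [DecidableEq N] [Nonempty N]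
    {P : N → Type} [∀ i, Fintype (P i)] [∀ i, DecidableEq (P i)] [∀ i, Nonempty (P i)]
    (u : N → (∀ j, P j) → ℝ) (M : ℝ)
    (hM : ∀ (i : N) (ρ : ∀ j, P j), |u i ρ| ≤ M)
    (T : ℕ) (hT : 0 < T) (C : ℝ)
    (δ : (∀ j, P j) → ℝ) (hpos : ∀ ρ, 0 ≤ δ ρ) (hsum : ∑ ρ, δ ρ = 1)
    (hcce : gap u δ ≤ C / Real.sqrt T)
    (ε : ℝ) (hε : KL δ (prodMarg δ) ≤ ε) :
    gap u (prodMarg δ) ≤ C / Real.sqrt T + 2 * M * Real.sqrt (2 * ε) :=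
  nashGap_of_regret_minimizer_general u M hM T C δ hpos hsum hcce ε hε
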